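/- Let α be a positive real affine root with ℓ(s_α) = 2·ht(α∨) − 1. Then α∨ < c = α_0∨ + θ∨ in the dominance order on the affine coroot lattice, where c is the imaginary coroot. -/

import Mathlib

/-- Elements of the affine root lattice (resp. affine coroot lattice) of the affine
(untwisted) Kac–Moody root system, written in coordinates with respect to the simple
roots `α_0, …, α_n` (resp. the simple coroots `α_0∨, …, α_n∨`).  The dominance
(partial) order `a ≤ b` (meaning `b - a` is a nonnegative combination of the simple
roots/coroots) is the coordinatewise order. -/
abbrev AffLat (n : ℕ) := Fin (n + 1) → ℤ

/-- The `i`-th simple root (resp. simple coroot) as a coordinate vector. -/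
def simpleVec {n : ℕ} (i : Fin (n + 1)) : AffLat n := Pi.single i 1

/-- The height of a root (resp. coroot): the sum of its coordinates in the basis of
simple roots (resp. simple coroots). -/
def htv {n : ℕ} (a : AffLat n) : ℤ := ∑ j, a j

/-- `a` is a simple root (a standard basis vector). -/
def IsSimpleVec {n : ℕ} (a : AffLat n) : Prop := ∃ i, a = simpleVec i

/-- Axiomatization of the affine (untwisted) Kac–Moody root system attached to a
finite simple Lie algebra, together with its affine Weyl group `W` (a Coxeter group
with simple reflections `s_0, …, s_n`), its action on the root and coroot lattices,
the coroot map `α ↦ α∨` on real roots, the reflection map `α ↦ s_α`, and the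
imaginary coroot `c = α_0∨ + θ∨`. -/
structure AffineRootSystem (n : ℕ) (W : Type*) [Group W] where
  /-- the affine Cartan matrix: `cartan i j = ⟨α_j, α_i∨⟩` -/
  cartan : Fin (n + 1) → Fin (n + 1) → ℤ
  cartan_diag : ∀ i, cartan i i = 2
  cartan_offdiag : ∀ i j, i ≠ j → cartan i j ≤ 0
  cartan_symm_zero : ∀ i j, cartan i j = 0 → cartan j i = 0
  /-- the Coxeter matrix of the affine Weyl group -/
  M : CoxeterMatrix (Fin (n + 1))
  /-- the affine Weyl group, as a Coxeter system with simple reflections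
  `cs.simple 0, …, cs.simple n` and Coxeter length `cs.length` -/
  cs : CoxeterSystem M W
  /-- the action of the affine Weyl group on the root lattice -/
  actR : W → AffLat n → AffLat n
  actR_one : ∀ a, actR 1 a = a
  actR_mul : ∀ u v a, actR (u * v) a = actR u (actR v a)
  actR_add : ∀ w a b, actR w (a + b) = actR w a + actR w b
  actR_simple : ∀ i a, actR (cs.simple i) a = a - (∑ k, cartan i k * a k) • simpleVec i
  /-- the action of the affine Weyl group on the coroot lattice -/
  actC : W → AffLat n → AffLat n
  actC_one : ∀ b, actC 1 b = b
  actC_mul : ∀ u v b, actC (u * v) b = actC u (actC v b)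
  actC_add : ∀ w a b, actC w (a + b) = actC w a + actC w b
  actC_simple : ∀ i b, actC (cs.simple i) b = b - (∑ k, cartan k i * b k) • simpleVec i
  /-- the coroot `α∨` of a real root `α` -/
  coroot : AffLat n → AffLat n
  coroot_simple : ∀ i, coroot (simpleVec i) = simpleVec i
  coroot_act : ∀ w a, coroot (actR w a) = actC w (coroot a)
  /-- the reflection `s_α ∈ W` of a real root `α` -/
  refl : AffLat n → W
  refl_simple : ∀ i, refl (simpleVec i) = cs.simple i
  refl_act : ∀ w a, refl (actR w a) = w * refl a * w⁻¹
  /-- the coordinates of the imaginary coroot `c = α_0∨ + θ∨` in the basis of simple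
  coroots; thus `imag 0 = 1` and `imag i = m_i` for `i ≥ 1`, where
  `θ∨ = m_1 α_1∨ + ⋯ + m_n α_n∨` -/
  imag : AffLat n
  imag_zero : imag 0 = 1
  imag_pos : ∀ i, 1 ≤ imag i
  imag_invariant : ∀ w, actC w imag = imag
  /-- the standard relation between lengths and positivity of roots:
  `ℓ(w s_α) < ℓ(w)` iff `w(α) < 0` -/
  length_refl_lt_iff : ∀ a : AffLat n, (∃ w i, a = actR w (simpleVec i)) → 0 ≤ a →
    ∀ w : W, cs.length (w * refl a) < cs.length w ↔ actR w a ≤ 0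

namespace AffineRootSystem

variable {n : ℕ} {W : Type*} [Group W] (R : AffineRootSystem n W)

/-- `α` is a positive real root of the affine root system. -/
def IsPosRoot (a : AffLat n) : Prop := (∃ w i, a = R.actR w (simpleVec i)) ∧ 0 ≤ a

/-- The evaluation pairing `⟨α, β∨⟩` of a root `α` (coordinates w.r.t. the simple
roots) against a coroot `β∨` (coordinates w.r.t. the simple coroots), computed via
the affine Cartan matrix `cartan i k = ⟨α_k, α_i∨⟩`. -/
def pairing (a b : AffLat n) : ℤ := ∑ i, ∑ k, b i * (R.cartan i k * a k)

/-- `α` belongs to the set `Π̃` of positive real roots with `ℓ(s_α) = 2 ht(α∨) - 1`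
(the roots appearing in the affine quantum Chevalley formula). -/
def IsChevalleyRoot (a : AffLat n) : Prop :=
  R.IsPosRoot a ∧ (R.cs.length (R.refl a) : ℤ) = 2 * htv (R.coroot a) - 1

end AffineRootSystem

/-!
Induct on `ℓ(s_α)`. A positive real root `α` that is not simple has a simple root `α_i` with
`s_α s_i` shorter than `s_α`; then `q = ⟨α_i, α∨⟩ ≥ 1`, `β = s_i α` is again a positive root,
`s_β = s_i s_α s_i` is shorter by two, and `α∨ = β∨ + q α_i∨`. Hence `ℓ(s_α) ≤ 2 ht(α∨) - 1`,
and in the case of equality `q = 1` and equality holds for `β`. By induction `β∨ ≤ c`, and since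
`⟨α_i, c - β∨⟩ = 1` with `c - β∨ ≥ 0`, the sign pattern of the Cartan matrix forces the
`i`-th coordinate of `c - β∨` to be positive, so `α∨ = β∨ + α_i∨ ≤ c`. Finally `α∨ ≠ c`, since
`s_α` negates `α∨` but fixes `c`.
-/

section

variable {n : ℕ}

@[simp]
lemma simpleVec_self (i : Fin (n + 1)) : (simpleVec i : AffLat n) i = 1 :=
  Pi.single_eq_same i 1

@[simp]
lemma simpleVec_of_ne {i k : Fin (n + 1)} (hk : k ≠ i) : (simpleVec i : AffLat n) k = 0 :=
  Pi.single_eq_of_ne hk 1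

lemma simpleVec_nonneg (i : Fin (n + 1)) : (0 : AffLat n) ≤ simpleVec i := by
  intro k
  by_cases hk : k = i <;> simp [hk]

lemma htv_sub (x y : AffLat n) : htv (x - y) = htv x - htv y := by
  simp [htv, Finset.sum_sub_distrib]

lemma htv_zsmul (m : ℤ) (x : AffLat n) : htv (m • x) = m * htv x := by
  simp [htv, Finset.mul_sum]

lemma htv_simpleVec (i : Fin (n + 1)) : htv (simpleVec i : AffLat n) = 1 := by
  simp [htv, simpleVec]

end

namespace AffineRootSystem

variable {n : ℕ} {W : Type*} [Group W] (R : AffineRootSystem n W)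

/-- `R.IsPosRoot a` is definitionally `R.IsRealRoot a ∧ 0 ≤ a`. -/
def IsRealRoot (a : AffLat n) : Prop := ∃ w i, a = R.actR w (simpleVec i)

lemma actR_neg (w : W) (x : AffLat n) : R.actR w (-x) = -R.actR w x :=
  map_neg (AddMonoidHom.mk' (R.actR w) (R.actR_add w)) x

lemma actR_sub (w : W) (x y : AffLat n) : R.actR w (x - y) = R.actR w x - R.actR w y :=
  map_sub (AddMonoidHom.mk' (R.actR w) (R.actR_add w)) x y

lemma actR_zsmul (w : W) (m : ℤ) (x : AffLat n) : R.actR w (m • x) = m • R.actR w x :=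
  map_zsmul (AddMonoidHom.mk' (R.actR w) (R.actR_add w)) m x

lemma actC_neg (w : W) (x : AffLat n) : R.actC w (-x) = -R.actC w x :=
  map_neg (AddMonoidHom.mk' (R.actC w) (R.actC_add w)) x

lemma actR_inv_actR (w : W) (x : AffLat n) : R.actR w⁻¹ (R.actR w x) = x := by
  rw [← R.actR_mul, inv_mul_cancel, R.actR_one]

lemma actR_actR_inv (w : W) (x : AffLat n) : R.actR w (R.actR w⁻¹ x) = x := by
  rw [← R.actR_mul, mul_inv_cancel, R.actR_one]

lemma actC_inv_actC (w : W) (x : AffLat n) : R.actC w⁻¹ (R.actC w x) = x := by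
  rw [← R.actC_mul, inv_mul_cancel, R.actC_one]

lemma pairing_sub_left (x y b : AffLat n) :
    R.pairing (x - y) b = R.pairing x b - R.pairing y b := by
  simp [pairing, mul_sub, Finset.sum_sub_distrib]

lemma pairing_sub_right (a x y : AffLat n) :
    R.pairing a (x - y) = R.pairing a x - R.pairing a y := by
  simp [pairing, sub_mul, Finset.sum_sub_distrib]

lemma pairing_zsmul_left (m : ℤ) (x b : AffLat n) :
    R.pairing (m • x) b = m * R.pairing x b := by
  simp only [pairing, Pi.smul_apply, smul_eq_mul, Finset.mul_sum]
  exact Finset.sum_congr rfl fun _ _ => Finset.sum_congr rfl fun _ _ => by ring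

lemma pairing_zsmul_right (m : ℤ) (a x : AffLat n) :
    R.pairing a (m • x) = m * R.pairing a x := by
  simp only [pairing, Pi.smul_apply, smul_eq_mul, Finset.mul_sum]
  exact Finset.sum_congr rfl fun _ _ => Finset.sum_congr rfl fun _ _ => by ring

lemma pairing_simpleVec_right (a : AffLat n) (i : Fin (n + 1)) :
    R.pairing a (simpleVec i) = ∑ k, R.cartan i k * a k := by
  simp [pairing, simpleVec, Pi.single_apply]

lemma pairing_simpleVec_left (b : AffLat n) (i : Fin (n + 1)) :
    R.pairing (simpleVec i) b = ∑ k, R.cartan k i * b k := by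
  simp [pairing, simpleVec, Pi.single_apply, mul_comm]

lemma pairing_simpleVec_self (i : Fin (n + 1)) :
    R.pairing (simpleVec i) (simpleVec i) = 2 := by
  rw [R.pairing_simpleVec_left]
  simp [simpleVec, Pi.single_apply, R.cartan_diag]

lemma actR_simple_eq (i : Fin (n + 1)) (a : AffLat n) :
    R.actR (R.cs.simple i) a = a - R.pairing a (simpleVec i) • simpleVec i := by
  rw [R.actR_simple, R.pairing_simpleVec_right]

lemma actC_simple_eq (i : Fin (n + 1)) (b : AffLat n) :
    R.actC (R.cs.simple i) b = b - R.pairing (simpleVec i) b • simpleVec i := by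
  rw [R.actC_simple, R.pairing_simpleVec_left]

lemma actR_simple_simpleVec (i : Fin (n + 1)) :
    R.actR (R.cs.simple i) (simpleVec i) = -simpleVec i := by
  rw [R.actR_simple_eq, R.pairing_simpleVec_self, two_smul, sub_add_cancel_left]

lemma actC_simple_simpleVec (i : Fin (n + 1)) :
    R.actC (R.cs.simple i) (simpleVec i) = -simpleVec i := by
  rw [R.actC_simple_eq, R.pairing_simpleVec_self, two_smul, sub_add_cancel_left]

lemma pairing_actR_simple_actC_simple (i : Fin (n + 1)) (a b : AffLat n) :
    R.pairing (R.actR (R.cs.simple i) a) (R.actC (R.cs.simple i) b) = R.pairing a b := by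
  simp only [actR_simple_eq, actC_simple_eq, pairing_sub_left, pairing_sub_right,
    pairing_zsmul_left, pairing_zsmul_right, pairing_simpleVec_self]
  ring

lemma pairing_actR_actC (w : W) (a b : AffLat n) :
    R.pairing (R.actR w a) (R.actC w b) = R.pairing a b := by
  induction w using R.cs.simple_induction_left with
  | one => rw [R.actR_one, R.actC_one]
  | mul_simple_left w i ih => rw [R.actR_mul, R.actC_mul, R.pairing_actR_simple_actC_simple, ih]

lemma pairing_simpleVec_imag (i : Fin (n + 1)) : R.pairing (simpleVec i) R.imag = 0 := by
  have h := congrFun (R.imag_invariant (R.cs.simple i)) i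
  simpa [actC_simple_eq, simpleVec] using h

lemma pairing_simpleVec_le {x : AffLat n} (hx : 0 ≤ x) (i : Fin (n + 1)) :
    R.pairing (simpleVec i) x ≤ 2 * x i := by
  rw [R.pairing_simpleVec_left, ← Finset.add_sum_erase _ _ (Finset.mem_univ i), R.cartan_diag]
  have : ∑ k ∈ Finset.univ.erase i, R.cartan k i * x k ≤ 0 :=
    Finset.sum_nonpos fun k hk =>
      mul_nonpos_of_nonpos_of_nonneg (R.cartan_offdiag k i (Finset.ne_of_mem_erase hk)) (hx k)
  linarith

lemma add_simpleVec_le_imag {x : AffLat n} (hx : x ≤ R.imag) {i : Fin (n + 1)}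
    (hxi : R.pairing (simpleVec i) x = -1) : x + simpleVec i ≤ R.imag := by
  have h := R.pairing_simpleVec_le (sub_nonneg.mpr hx) i
  rw [R.pairing_sub_right, R.pairing_simpleVec_imag, hxi] at h
  intro k
  by_cases hk : k = i
  · subst hk
    simp only [Pi.sub_apply, Pi.add_apply, simpleVec_self] at h ⊢
    omega
  · simpa [hk] using hx k

lemma refl_actR_simpleVec (w : W) (j : Fin (n + 1)) :
    R.refl (R.actR w (simpleVec j)) = w * R.cs.simple j * w⁻¹ := by
  rw [R.refl_act, R.refl_simple]

lemma coroot_actR_simpleVec (w : W) (j : Fin (n + 1)) :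
    R.coroot (R.actR w (simpleVec j)) = R.actC w (simpleVec j) := by
  rw [R.coroot_act, R.coroot_simple]

lemma coroot_actR_simple (i : Fin (n + 1)) (a : AffLat n) :
    R.coroot (R.actR (R.cs.simple i) a)
      = R.coroot a - R.pairing (simpleVec i) (R.coroot a) • simpleVec i := by
  rw [R.coroot_act, R.actC_simple_eq]

lemma htv_coroot_actR_simple (i : Fin (n + 1)) (a : AffLat n) :
    htv (R.coroot (R.actR (R.cs.simple i) a))
      = htv (R.coroot a) - R.pairing (simpleVec i) (R.coroot a) := by
  rw [R.coroot_actR_simple, htv_sub, htv_zsmul, htv_simpleVec, mul_one]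

lemma isRightDescent_iff_actR_nonpos (w : W) (i : Fin (n + 1)) :
    R.cs.IsRightDescent w i ↔ R.actR w (simpleVec i) ≤ 0 := by
  have h := R.length_refl_lt_iff (simpleVec i) ⟨1, i, (R.actR_one _).symm⟩ (simpleVec_nonneg i) w
  rwa [R.refl_simple] at h

variable {R} {a : AffLat n}

lemma IsRealRoot.actR (ha : R.IsRealRoot a) (u : W) : R.IsRealRoot (R.actR u a) := by
  obtain ⟨w, j, rfl⟩ := ha
  exact ⟨u * w, j, (R.actR_mul u w _).symm⟩

lemma IsRealRoot.actR_refl (ha : R.IsRealRoot a) (x : AffLat n) :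
    R.actR (R.refl a) x = x - R.pairing x (R.coroot a) • a := by
  obtain ⟨w, j, rfl⟩ := ha
  have hq := R.pairing_actR_actC w⁻¹ x (R.actC w (simpleVec j))
  rw [R.actC_inv_actC] at hq
  rw [R.refl_actR_simpleVec, R.actR_mul, R.actR_mul, R.actR_simple_eq, R.actR_sub,
    R.actR_zsmul, R.actR_actR_inv, R.coroot_actR_simpleVec, hq]

lemma IsRealRoot.actC_refl_coroot (ha : R.IsRealRoot a) :
    R.actC (R.refl a) (R.coroot a) = -R.coroot a := by
  obtain ⟨w, j, rfl⟩ := ha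
  rw [R.refl_actR_simpleVec, R.coroot_actR_simpleVec, R.actC_mul, R.actC_mul,
    R.actC_inv_actC, R.actC_simple_simpleVec, R.actC_neg]

lemma IsRealRoot.refl_inv (ha : R.IsRealRoot a) : (R.refl a)⁻¹ = R.refl a := by
  obtain ⟨w, j, rfl⟩ := ha
  rw [R.refl_actR_simpleVec, mul_inv_rev, mul_inv_rev, inv_inv, R.cs.inv_simple, mul_assoc]

lemma IsRealRoot.refl_ne_one (ha : R.IsRealRoot a) : R.refl a ≠ 1 := by
  obtain ⟨w, j, rfl⟩ := ha
  rw [R.refl_actR_simpleVec, Ne, conj_eq_one_iff, ← R.cs.length_eq_zero_iff, R.cs.length_simple]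
  exact one_ne_zero

lemma IsRealRoot.coroot_ne_imag (ha : R.IsRealRoot a) : R.coroot a ≠ R.imag := by
  intro h
  have h0 := congrFun ha.actC_refl_coroot 0
  rw [h, R.imag_invariant, Pi.neg_apply, R.imag_zero] at h0
  omega

lemma IsRealRoot.nonneg_or_nonpos (ha : R.IsRealRoot a) : 0 ≤ a ∨ a ≤ 0 := by
  obtain ⟨w, j, rfl⟩ := ha
  by_cases hw : R.cs.IsRightDescent w j
  · exact Or.inr ((R.isRightDescent_iff_actR_nonpos w j).mp hw)
  · rw [R.cs.isRightDescent_iff_not_isRightDescent_mul, not_not,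
      R.isRightDescent_iff_actR_nonpos, R.actR_mul, R.actR_simple_simpleVec, R.actR_neg,
      neg_nonpos] at hw
    exact Or.inl hw

lemma IsPosRoot.eq_simpleVec_of_support (ha : R.IsPosRoot a) {i : Fin (n + 1)}
    (hsup : ∀ k, k ≠ i → a k = 0) : a = simpleVec i := by
  obtain ⟨⟨w, j, rfl⟩, hpos⟩ := ha
  set m := R.actR w (simpleVec j) i
  have ham : R.actR w (simpleVec j) = m • simpleVec i := by
    funext k
    by_cases hk : k = i
    · subst hk
      simp [m]
    · simp [hk, hsup k hk]
  have hunit : m * R.actR w⁻¹ (simpleVec i) j = 1 := by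
    have h := congrFun (congrArg (R.actR w⁻¹) ham) j
    rw [R.actR_inv_actR, R.actR_zsmul] at h
    simpa using h.symm
  have hm : m = 1 := (Int.eq_one_or_neg_one_of_mul_eq_one hunit).resolve_right fun h => by
    have := hpos i
    simp only [Pi.zero_apply] at this
    omega
  rwa [hm, one_smul] at ham

lemma IsPosRoot.actR_simple (ha : R.IsPosRoot a) {i : Fin (n + 1)} (hai : a ≠ simpleVec i) :
    R.IsPosRoot (R.actR (R.cs.simple i) a) := by
  have hreal : R.IsRealRoot (R.actR (R.cs.simple i) a) := IsRealRoot.actR ha.1 _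
  refine ⟨hreal, hreal.nonneg_or_nonpos.resolve_right fun hneg =>
    hai (ha.eq_simpleVec_of_support fun k hk => le_antisymm ?_ (ha.2 k))⟩
  simpa [R.actR_simple_eq, hk] using hneg k

lemma IsPosRoot.one_le_pairing_of_isLeftDescent (ha : R.IsPosRoot a) {i : Fin (n + 1)}
    (hi : R.cs.IsLeftDescent (R.refl a) i) : 1 ≤ R.pairing (simpleVec i) (R.coroot a) := by
  have hr : R.cs.IsRightDescent (R.refl a) i := by
    rwa [← R.cs.isLeftDescent_inv_iff, IsRealRoot.refl_inv ha.1]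
  rw [R.isRightDescent_iff_actR_nonpos, IsRealRoot.actR_refl ha.1] at hr
  have h := hr i
  have hai := ha.2 i
  simp only [Pi.sub_apply, Pi.smul_apply, smul_eq_mul, simpleVec_self, Pi.zero_apply] at h hai
  nlinarith

lemma IsPosRoot.length_refl_actR_simple (ha : R.IsPosRoot a) {i : Fin (n + 1)}
    (hai : a ≠ simpleVec i) (hi : R.cs.IsLeftDescent (R.refl a) i) :
    R.cs.length (R.refl (R.actR (R.cs.simple i) a)) + 2 = R.cs.length (R.refl a) := by
  have hq := ha.one_le_pairing_of_isLeftDescent hi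
  have hb := (ha.actR_simple hai).2
  have hdesc : R.cs.IsRightDescent (R.cs.simple i * R.refl a) i := by
    rw [R.isRightDescent_iff_actR_nonpos, R.actR_mul, IsRealRoot.actR_refl ha.1, R.actR_sub,
      R.actR_zsmul, R.actR_simple_simpleVec]
    intro k
    have h1 := hb k
    have h2 := simpleVec_nonneg i k
    simp only [Pi.sub_apply, Pi.neg_apply, Pi.smul_apply, smul_eq_mul, Pi.zero_apply] at *
    nlinarith
  rw [R.cs.isLeftDescent_iff] at hi
  rw [R.cs.isRightDescent_iff] at hdesc
  rw [R.refl_act, R.cs.inv_simple]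
  omega

lemma IsPosRoot.exists_descent (ha : R.IsPosRoot a) (hs : ¬IsSimpleVec a) :
    ∃ i, R.IsPosRoot (R.actR (R.cs.simple i) a) ∧
      R.cs.length (R.refl (R.actR (R.cs.simple i) a)) + 2 = R.cs.length (R.refl a) ∧
      1 ≤ R.pairing (simpleVec i) (R.coroot a) := by
  obtain ⟨i, hi⟩ := R.cs.exists_leftDescent_of_ne_one (IsRealRoot.refl_ne_one ha.1)
  have hai : a ≠ simpleVec i := fun h => hs ⟨i, h⟩
  exact ⟨i, ha.actR_simple hai, ha.length_refl_actR_simple hai hi,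
    ha.one_le_pairing_of_isLeftDescent hi⟩

theorem IsPosRoot.length_refl_le (ha : R.IsPosRoot a) :
    (R.cs.length (R.refl a) : ℤ) ≤ 2 * htv (R.coroot a) - 1 := by
  induction hN : R.cs.length (R.refl a) using Nat.strong_induction_on generalizing a with
  | _ N ih =>
  by_cases hs : IsSimpleVec a
  · obtain ⟨i, rfl⟩ := hs
    rw [R.refl_simple, R.cs.length_simple] at hN
    rw [R.coroot_simple, htv_simpleVec, ← hN]
    norm_num
  · obtain ⟨i, hb, hlen, hq⟩ := ha.exists_descent hs
    have := ih _ (by omega) hb rfl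
    rw [R.htv_coroot_actR_simple] at this
    omega

theorem IsPosRoot.coroot_le_imag_of_length_eq (ha : R.IsPosRoot a)
    (hlen : (R.cs.length (R.refl a) : ℤ) = 2 * htv (R.coroot a) - 1) :
    R.coroot a ≤ R.imag := by
  induction hN : R.cs.length (R.refl a) using Nat.strong_induction_on generalizing a with
  | _ N ih =>
  by_cases hs : IsSimpleVec a
  · obtain ⟨i, rfl⟩ := hs
    intro k
    have := R.imag_pos k
    rw [R.coroot_simple]
    by_cases hk : k = i
    · simpa [hk] using this
    · simp only [simpleVec_of_ne hk]
      omega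
  · obtain ⟨i, hb, hlenb, hq⟩ := ha.exists_descent hs
    have hleb := hb.length_refl_le
    rw [R.htv_coroot_actR_simple] at hleb
    have hq1 : R.pairing (simpleVec i) (R.coroot a) = 1 := by omega
    have hbc := ih _ (by omega) hb (by rw [R.htv_coroot_actR_simple]; omega) rfl
    have hcb := R.coroot_actR_simple i a
    rw [hq1, one_smul] at hcb
    have hpb : R.pairing (simpleVec i) (R.coroot (R.actR (R.cs.simple i) a)) = -1 := by
      rw [hcb, R.pairing_sub_right, R.pairing_simpleVec_self, hq1]
      norm_num
    calc R.coroot a = R.coroot (R.actR (R.cs.simple i) a) + simpleVec i := by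
          rw [hcb, sub_add_cancel]
      _ ≤ R.imag := R.add_simpleVec_le_imag hbc hpb

end AffineRootSystem

/-- If a positive real affine root `α` satisfies
`ℓ(s_α) = 2 ht(α∨) - 1`, then `α∨ < c = α_0∨ + θ∨` in the dominance order on the
affine coroot lattice, `c` being the imaginary coroot. -/
theorem coroot_lt_imaginary_of_length_eq {n : ℕ} {W : Type*} [Group W]
    (R : AffineRootSystem n W) (a : AffLat n) (ha : R.IsPosRoot a)
    (hlen : (R.cs.length (R.refl a) : ℤ) = 2 * htv (R.coroot a) - 1) :
    R.coroot a < R.imag :=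
  (ha.coroot_le_imag_of_length_eq hlen).lt_of_ne (AffineRootSystem.IsRealRoot.coroot_ne_imag ha.1)
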